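/- Let γ ∈ (0,1), m, n ≥ 1, and let constants 0 < δ₁ ≤ δ₂, δ > 0, C > 0 be given. Let P ∈ [δ₁, δ₂], let b ∈ ℝ^m with |b| ≤ C, let σ ∈ ℝ^{m×n} with σσ' ≥ δ·I_m and |σ| ≤ C, let Λ ∈ ℝⁿ, and let Θ ⊆ ℝ^m × [0,∞) be a set containing (0,0). Then there exists a constant K > 0, depending only on (δ₁, δ₂, δ, γ, C, m, n) and not on Λ, such that every pair (π̂, ĉ) ∈ Θ that attains sup_{(π,c) ∈ Θ} [ −((1−γ)/2)·P·π'σσ'π + π'(Pb + σΛ) + c^γ/γ − P·c ] satisfies |π̂| ≤ K·(1 + |Λ|) and ĉ ≤ K·(1 + |Λ|²). -/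

import Mathlib

/-!
Comparing the maximiser with the admissible point `(0, 0)`, where the objective vanishes, gives
`0 ≤ H(π̂, ĉ)`. The quadratic form is coercive, `π'σσ'π ≥ δ|π|²`, the linear term is at most
`(δ₂ C + C)(1 + |Λ|)|π|` by Cauchy–Schwarz, and since `γ < 1` the utility `c^γ/γ` is absorbed by
half of the consumption penalty `P c ≥ δ₁ c` up to an additive constant. Hence
`a|π̂|² + (δ₁/2) ĉ ≤ B (1 + |Λ|)|π̂| + M` with `a, B, M` independent of `Λ`: solving this quadratic
inequality bounds `|π̂|` linearly in `|Λ|`, and feeding that back bounds `ĉ` quadratically.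
-/

open Matrix

theorem Real.exists_rpow_le_mul_add {γ ε : ℝ} (hγ₀ : 0 ≤ γ) (hγ₁ : γ < 1) (hε : 0 < ε) :
    ∃ M, 0 ≤ M ∧ ∀ c, 0 ≤ c → c ^ γ ≤ ε * c + M := by
  -- past the threshold `T`, where `T ^ (γ - 1) = ε`, the power is dominated by `ε * c`
  set T := ε ^ (γ - 1)⁻¹
  have hT : 0 < T := Real.rpow_pos_of_pos hε _
  have hTε : T ^ (γ - 1) = ε := by
    rw [← Real.rpow_mul hε.le, inv_mul_cancel₀ (by linarith), Real.rpow_one]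
  refine ⟨T ^ γ, by positivity, fun c hc => ?_⟩
  rcases le_or_gt c T with hcT | hTc
  · linarith [Real.rpow_le_rpow hc hcT hγ₀, mul_nonneg hε.le hc]
  · have hc₀ : 0 < c := hT.trans hTc
    calc c ^ γ = c ^ (γ - 1) * c := by
          rw [← Real.rpow_add_one hc₀.ne']; norm_num
      _ ≤ T ^ (γ - 1) * c :=
          mul_le_mul_of_nonneg_right (Real.rpow_le_rpow_of_nonpos hT hTc.le (by linarith)) hc
      _ ≤ ε * c + T ^ γ := by
          rw [hTε]; exact le_add_of_nonneg_right (by positivity)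

theorem le_div_add_sqrt_of_mul_sq_le {a D M s : ℝ} (ha : 0 < a) (hD : 0 ≤ D)
    (h : a * s ^ 2 ≤ D * s + M) : s ≤ D / a + √(M / a) := by
  set r := √(M / a)
  have hr : 0 ≤ r := Real.sqrt_nonneg _
  have hM : M ≤ a * r ^ 2 := by
    rw [Real.sq_sqrt', ← div_le_iff₀' ha]; exact le_max_left _ _
  by_contra! hs
  have hDa : 0 ≤ D / a := div_nonneg hD ha.le
  have has : D + a * r < a * s := by
    have := mul_lt_mul_of_pos_left hs ha
    rwa [mul_add, mul_div_cancel₀ _ ha.ne'] at this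
  have hrs : r * r ≤ r * s := mul_le_mul_of_nonneg_left (by linarith) hr
  linarith [mul_lt_mul_of_pos_right has (show 0 < s by linarith),
    mul_le_mul_of_nonneg_left hrs ha.le]

theorem exists_bound_of_mul_sq_add_le {a e B M : ℝ} (ha : 0 < a) (he : 0 < e) (hB : 0 ≤ B)
    (hM : 0 ≤ M) :
    ∃ K, 0 < K ∧ ∀ s c L : ℝ, 0 ≤ s → 0 ≤ c → 0 ≤ L →
      a * s ^ 2 + e * c ≤ B * (1 + L) * s + M → s ≤ K * (1 + L) ∧ c ≤ K * (1 + L ^ 2) := by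
  set K₁ := B / a + √(M / a)
  have hK₁ : 0 ≤ K₁ := by positivity
  set K₂ := (2 * B * K₁ + M) / e
  have hK₂ : 0 ≤ K₂ := by positivity
  refine ⟨1 + K₁ + K₂, by positivity, fun s c L hs hc hL h => ?_⟩
  have hsK₁ : s ≤ K₁ * (1 + L) := by
    have hquad : a * s ^ 2 ≤ B * (1 + L) * s + M := by linarith [mul_nonneg he.le hc]
    calc s ≤ B * (1 + L) / a + √(M / a) := le_div_add_sqrt_of_mul_sq_le ha (by positivity) hquad
      _ ≤ B / a * (1 + L) + √(M / a) * (1 + L) := by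
          rw [mul_div_right_comm]
          gcongr
          exact le_mul_of_one_le_right (Real.sqrt_nonneg _) (by linarith)
      _ = K₁ * (1 + L) := by ring
  have hcK₂ : c ≤ K₂ * (1 + L ^ 2) := by
    rw [div_mul_eq_mul_div, le_div_iff₀' he]
    have hL2 : B * K₁ * (1 + L) ^ 2 ≤ 2 * B * K₁ * (1 + L ^ 2) := by
      linarith [mul_nonneg (mul_nonneg hB hK₁) (sq_nonneg (1 - L))]
    have hsB : B * (1 + L) * s ≤ B * K₁ * (1 + L) ^ 2 :=
      calc B * (1 + L) * s ≤ B * (1 + L) * (K₁ * (1 + L)) := by gcongr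
        _ = B * K₁ * (1 + L) ^ 2 := by ring
    linarith [mul_nonneg ha.le (sq_nonneg s), mul_nonneg hM (sq_nonneg L)]
  exact ⟨hsK₁.trans (mul_le_mul_of_nonneg_right (by linarith) (by linarith)),
    hcK₂.trans (mul_le_mul_of_nonneg_right (by linarith) (by positivity))⟩

section
variable {m n : Type*} [Fintype m] [Fintype n]

theorem Matrix.PosSemidef.mul_sum_sq_le_dotProduct_mulVec [DecidableEq m] {A : Matrix m m ℝ}
    {δ : ℝ} (h : (A - δ • 1).PosSemidef) (x : m → ℝ) : δ * ∑ i, x i ^ 2 ≤ x ⬝ᵥ (A *ᵥ x) := by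
  have := h.dotProduct_mulVec_nonneg x
  simp only [star_trivial, sub_mulVec, smul_mulVec, one_mulVec, dotProduct_sub, dotProduct_smul,
    smul_eq_mul, sub_nonneg] at this
  simpa only [dotProduct, sq] using this

theorem Matrix.sum_mulVec_sq_le (σ : Matrix m n ℝ) (y : n → ℝ) :
    ∑ i, (σ *ᵥ y) i ^ 2 ≤ (∑ i, ∑ j, σ i j ^ 2) * ∑ j, y j ^ 2 := by
  rw [Finset.sum_mul]
  exact Finset.sum_le_sum fun i _ => Finset.sum_mul_sq_le_sq_mul_sq _ _ _

theorem Matrix.dotProduct_mulVec_le (x : m → ℝ) (σ : Matrix m n ℝ) (y : n → ℝ) :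
    x ⬝ᵥ (σ *ᵥ y) ≤ √(∑ i, x i ^ 2) * (√(∑ i, ∑ j, σ i j ^ 2) * √(∑ j, y j ^ 2)) :=
  calc x ⬝ᵥ (σ *ᵥ y) ≤ √(∑ i, x i ^ 2) * √(∑ i, (σ *ᵥ y) i ^ 2) :=
        Real.sum_mul_le_sqrt_mul_sqrt _ _ _
    _ ≤ √(∑ i, x i ^ 2) * (√(∑ i, ∑ j, σ i j ^ 2) * √(∑ j, y j ^ 2)) := by
        rw [← Real.sqrt_mul (x := ∑ i, ∑ j, σ i j ^ 2) (by positivity)]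
        exact mul_le_mul_of_nonneg_left (Real.sqrt_le_sqrt (σ.sum_mulVec_sq_le y))
          (Real.sqrt_nonneg _)

end

section
variable {m n : Type*} [Fintype m] [Fintype n] {γ P : ℝ} {b : m → ℝ} {σ : Matrix m n ℝ}
  {Λ : n → ℝ}

variable (γ P b σ Λ) in
noncomputable def powerHamiltonian (p : (m → ℝ) × ℝ) : ℝ :=
  -((1 - γ) / 2) * P * (p.1 ⬝ᵥ ((σ * σᵀ) *ᵥ p.1)) + p.1 ⬝ᵥ (P • b + σ *ᵥ Λ)
    + p.2 ^ γ / γ - P * p.2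

theorem powerHamiltonian_zero (hγ : γ ≠ 0) : powerHamiltonian γ P b σ Λ (0, 0) = 0 := by
  simp [powerHamiltonian, Real.zero_rpow hγ]

theorem powerHamiltonian_le [DecidableEq m] {δ : ℝ} (hγ : γ ≤ 1) (hP : 0 ≤ P)
    (hσ : (σ * σᵀ - δ • 1).PosSemidef) (π : m → ℝ) (c : ℝ) :
    powerHamiltonian γ P b σ Λ (π, c) ≤
      -((1 - γ) / 2 * P * δ) * ∑ i, π i ^ 2
        + √(∑ i, π i ^ 2) * (P * √(∑ i, b i ^ 2) + √(∑ i, ∑ j, σ i j ^ 2) * √(∑ j, Λ j ^ 2))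
        + c ^ γ / γ - P * c := by
  have hquad : (1 - γ) / 2 * P * (δ * ∑ i, π i ^ 2) ≤ (1 - γ) / 2 * P * (π ⬝ᵥ ((σ * σᵀ) *ᵥ π)) :=
    mul_le_mul_of_nonneg_left (hσ.mul_sum_sq_le_dotProduct_mulVec π)
      (mul_nonneg (by linarith) hP)
  have hb : π ⬝ᵥ b ≤ √(∑ i, π i ^ 2) * √(∑ i, b i ^ 2) := Real.sum_mul_le_sqrt_mul_sqrt _ _ _
  have hσΛ := Matrix.dotProduct_mulVec_le π σ Λ
  simp only [powerHamiltonian, dotProduct_add, dotProduct_smul, smul_eq_mul]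
  linarith [mul_le_mul_of_nonneg_left hb hP]

theorem powerHamiltonian_le_of_bounds [DecidableEq m] {δ₁ δ₂ δ C : ℝ} (hγ : γ ≤ 1)
    (hδ₁ : 0 ≤ δ₁) (hδ : 0 ≤ δ) (hP : P ∈ Set.Icc δ₁ δ₂) (hb : √(∑ i, b i ^ 2) ≤ C)
    (hσ : (σ * σᵀ - δ • 1).PosSemidef) (hσC : √(∑ i, ∑ j, σ i j ^ 2) ≤ C) (π : m → ℝ) {c : ℝ}
    (hc : 0 ≤ c) :
    powerHamiltonian γ P b σ Λ (π, c) ≤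
      -((1 - γ) / 2 * δ₁ * δ) * √(∑ i, π i ^ 2) ^ 2
        + (δ₂ * C + C) * (1 + √(∑ j, Λ j ^ 2)) * √(∑ i, π i ^ 2) + c ^ γ / γ - δ₁ * c := by
  have hP₀ : 0 ≤ P := hδ₁.trans hP.1
  have hH := powerHamiltonian_le (b := b) (Λ := Λ) hγ hP₀ hσ π c
  set s := √(∑ i, π i ^ 2)
  set L := √(∑ j, Λ j ^ 2)
  rw [← Real.sq_sqrt (Finset.sum_nonneg fun i _ => sq_nonneg (π i))] at hH
  have hs : 0 ≤ s := Real.sqrt_nonneg _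
  have hL : 0 ≤ L := Real.sqrt_nonneg _
  have hC : 0 ≤ C := (Real.sqrt_nonneg _).trans hb
  have hquad : (1 - γ) / 2 * δ₁ * δ * s ^ 2 ≤ (1 - γ) / 2 * P * δ * s ^ 2 := by
    have : 0 ≤ (1 - γ) / 2 := by linarith
    gcongr
    exact hP.1
  have hlin : P * √(∑ i, b i ^ 2) + √(∑ i, ∑ j, σ i j ^ 2) * L ≤ (δ₂ * C + C) * (1 + L) := by
    have : P * √(∑ i, b i ^ 2) ≤ δ₂ * C := mul_le_mul hP.2 hb (Real.sqrt_nonneg _) (hP₀.trans hP.2)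
    linarith [mul_le_mul_of_nonneg_right hσC hL, mul_nonneg (mul_nonneg (hP₀.trans hP.2) hC) hL]
  linarith [mul_le_mul_of_nonneg_right hP.1 hc, mul_le_mul_of_nonneg_left hlin hs]

end

theorem stmt_19_general (γ : ℝ) (hγ : γ ∈ Set.Ioo (0 : ℝ) 1) (m n : ℕ)
    (δ₁ δ₂ δ C : ℝ) (hδ₁ : 0 < δ₁) (hδ₁₂ : δ₁ ≤ δ₂) (hδ : 0 < δ) (hC : 0 < C) :
    ∃ K : ℝ, 0 < K ∧
      ∀ P ∈ Set.Icc δ₁ δ₂, ∀ b : Fin m → ℝ, Real.sqrt (∑ i, b i ^ 2) ≤ C →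
      ∀ σ : Matrix (Fin m) (Fin n) ℝ,
        (σ * σᵀ - δ • (1 : Matrix (Fin m) (Fin m) ℝ)).PosSemidef →
        Real.sqrt (∑ i, ∑ j, σ i j ^ 2) ≤ C →
      ∀ Λ : Fin n → ℝ, ∀ Θ : Set ((Fin m → ℝ) × ℝ),
        (∀ p ∈ Θ, 0 ≤ p.2) → ((0 : Fin m → ℝ), (0 : ℝ)) ∈ Θ →
      ∀ πhat : Fin m → ℝ, ∀ chat : ℝ, (πhat, chat) ∈ Θ →
        (∀ p ∈ Θ,
          -((1 - γ) / 2) * P * (p.1 ⬝ᵥ ((σ * σᵀ) *ᵥ p.1)) + p.1 ⬝ᵥ (P • b + σ *ᵥ Λ)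
              + p.2 ^ γ / γ - P * p.2
            ≤ -((1 - γ) / 2) * P * (πhat ⬝ᵥ ((σ * σᵀ) *ᵥ πhat)) + πhat ⬝ᵥ (P • b + σ *ᵥ Λ)
              + chat ^ γ / γ - P * chat) →
        Real.sqrt (∑ i, πhat i ^ 2) ≤ K * (1 + Real.sqrt (∑ j, Λ j ^ 2))
          ∧ chat ≤ K * (1 + ∑ j, Λ j ^ 2) := by
  obtain ⟨hγ₀, hγ₁⟩ := hγ
  obtain ⟨M, hM, hrpow⟩ := Real.exists_rpow_le_mul_add hγ₀.le hγ₁ (by positivity : 0 < γ * (δ₁ / 2))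
  have ha : 0 < (1 - γ) / 2 * δ₁ * δ := mul_pos (mul_pos (by linarith) hδ₁) hδ
  have hB : 0 ≤ δ₂ * C + C := add_nonneg (mul_nonneg (by linarith) hC.le) hC.le
  obtain ⟨K, hK, hbound⟩ := exists_bound_of_mul_sq_add_le ha (half_pos hδ₁) hB (M := M / γ)
    (by positivity)
  refine ⟨K, hK, fun P hP b hb σ hσ hσC Λ Θ hΘ hΘ₀ π c hπc hopt => ?_⟩
  have hc : 0 ≤ c := hΘ _ hπc
  have hvalue : (0 : ℝ) ≤ _ := (powerHamiltonian_zero (b := b) (σ := σ) (Λ := Λ) hγ₀.ne').symm.le.trans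
    ((hopt _ hΘ₀).trans (powerHamiltonian_le_of_bounds hγ₁.le hδ₁.le hδ.le hP hb hσ hσC π hc))
  have hpow : c ^ γ / γ ≤ δ₁ / 2 * c + M / γ := by
    rw [div_le_iff₀ hγ₀, add_mul, div_mul_cancel₀ _ hγ₀.ne']
    linarith [hrpow c hc]
  have h := hbound √(∑ i, π i ^ 2) c √(∑ j, Λ j ^ 2) (Real.sqrt_nonneg _) hc (Real.sqrt_nonneg _)
    (by linarith)
  rwa [Real.sq_sqrt (Finset.sum_nonneg fun j _ => sq_nonneg (Λ j))] at h

theorem stmt_19 (γ : ℝ) (hγ : γ ∈ Set.Ioo (0 : ℝ) 1) (m n : ℕ) (hm : 1 ≤ m) (hn : 1 ≤ n)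
    (δ₁ δ₂ δ C : ℝ) (hδ₁ : 0 < δ₁) (hδ₁₂ : δ₁ ≤ δ₂) (hδ : 0 < δ) (hC : 0 < C) :
    ∃ K : ℝ, 0 < K ∧
      ∀ P ∈ Set.Icc δ₁ δ₂, ∀ b : Fin m → ℝ, Real.sqrt (∑ i, b i ^ 2) ≤ C →
      ∀ σ : Matrix (Fin m) (Fin n) ℝ,
        (σ * σᵀ - δ • (1 : Matrix (Fin m) (Fin m) ℝ)).PosSemidef →
        Real.sqrt (∑ i, ∑ j, σ i j ^ 2) ≤ C →
      ∀ Λ : Fin n → ℝ, ∀ Θ : Set ((Fin m → ℝ) × ℝ),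
        (∀ p ∈ Θ, 0 ≤ p.2) → ((0 : Fin m → ℝ), (0 : ℝ)) ∈ Θ →
      ∀ πhat : Fin m → ℝ, ∀ chat : ℝ, (πhat, chat) ∈ Θ →
        (∀ p ∈ Θ,
          -((1 - γ) / 2) * P * (p.1 ⬝ᵥ ((σ * σᵀ) *ᵥ p.1)) + p.1 ⬝ᵥ (P • b + σ *ᵥ Λ)
              + p.2 ^ γ / γ - P * p.2
            ≤ -((1 - γ) / 2) * P * (πhat ⬝ᵥ ((σ * σᵀ) *ᵥ πhat)) + πhat ⬝ᵥ (P • b + σ *ᵥ Λ)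
              + chat ^ γ / γ - P * chat) →
        Real.sqrt (∑ i, πhat i ^ 2) ≤ K * (1 + Real.sqrt (∑ j, Λ j ^ 2))
          ∧ chat ≤ K * (1 + ∑ j, Λ j ^ 2) :=
  stmt_19_general γ hγ m n δ₁ δ₂ δ C hδ₁ hδ₁₂ hδ hC
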